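/- arXiv:2206.00884 — 4 statements merged into one kernel-verified Lean document; each statement's English description precedes it below -/
import Mathlib

section
/- Let m, n, m', n' be nonzero integers with |m| < |n| and |m'| < |n'|, and let φ : BS(m,n) → BS(m',n') be a line-preserving bijection. Then φ preserves the labels of standard lines: for every g ∈ BS(m,n), the image φ(g⟨a⟩) of the a-line through g is a left coset of the cyclic subgroup generated by the generator a of BS(m',n'), and the image φ(g⟨t⟩) of the t-line through g is a left coset of the cyclic subgroup generated by the generator t of BS(m',n'). -/
/-!
At each point `g` a line-preserving bijection `φ` either keeps both labels or swaps them, because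
the `a`-line and the `t`-line through `g` are distinct standard lines through `φ g`. Whether the
`a`-line through `g` goes to an `a`-line is constant along `a`-lines, hence by this dichotomy also
along `t`-lines, hence on the whole group. So it suffices to rule out a bijection swapping all
labels, which identifies `a`-lines of `BS(m,n)` with `t`-lines of `BS(m',n')` preserving incidence.

In any `BS(m,n)` a `t`-line meeting two `a`-lines is never the only one, since
`a^(nˢ) tˢ = tˢ a^(mˢ)`. If `|m'|, |n'| ≥ 2`, Britton's lemma shows that `⟨a⟩` is the only `a`-line
meeting both `⟨t⟩` and `a⟨t⟩`. If `|m'| = 1`, every element is `tⁱ aᶜ tʲ`, so any two `t`-lines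
have a common `a`-transversal, whereas for `|n| ≥ 2` no `t`-line meets both `⟨a⟩` and
`t⁻¹at⟨a⟩`.
-/

/-- The single defining relator `t a^m t⁻¹ (a^n)⁻¹` of the Baumslag–Solitar group `BS(m,n)`,
as an element of the free group on `Bool`, where `false` stands for the generator `a` and
`true` for the generator `t`. -/
def bsRel (m n : ℤ) : FreeGroup Bool :=
  FreeGroup.of true * FreeGroup.of false ^ m * (FreeGroup.of true)⁻¹ *
    (FreeGroup.of false ^ n)⁻¹

/-- The Baumslag–Solitar group `BS(m,n) = ⟨a, t ∣ t a^m t⁻¹ = a^n⟩`. -/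
abbrev BS (m n : ℤ) : Type := PresentedGroup ({bsRel m n} : Set (FreeGroup Bool))

/-- The generator `a` of `BS(m,n)`. -/
def BS.a (m n : ℤ) : BS m n := PresentedGroup.of false

/-- The generator `t` (stable letter) of `BS(m,n)`. -/
def BS.t (m n : ℤ) : BS m n := PresentedGroup.of true

/-- The `a`-line through `g` in `BS(m,n)`: the left coset `g⟨a⟩`. -/
def aLine (m n : ℤ) (g : BS m n) : Set (BS m n) := {x | ∃ i : ℤ, x = g * BS.a m n ^ i}

/-- The `t`-line through `g` in `BS(m,n)`: the left coset `g⟨t⟩`. -/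
def tLine (m n : ℤ) (g : BS m n) : Set (BS m n) := {x | ∃ i : ℤ, x = g * BS.t m n ^ i}

/-- A standard line in `BS(m,n)` is an `a`-line or a `t`-line. -/
def IsStandardLine (m n : ℤ) (ℓ : Set (BS m n)) : Prop :=
  (∃ g, ℓ = aLine m n g) ∨ (∃ g, ℓ = tLine m n g)

/-- A map `BS(m,n) → BS(m',n')` is line-preserving if the image of every standard line is a
standard line. -/
def LinePreserving {m n m' n' : ℤ} (φ : BS m n → BS m' n') : Prop :=
  ∀ ℓ : Set (BS m n), IsStandardLine m n ℓ → IsStandardLine m' n' (φ '' ℓ)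

namespace HNNExtension

variable {G : Type*} [Group G] {A B : Subgroup G} {φ : A ≃* B}

/-- Britton's lemma for the word `tᵘ ⋯ tᵘ g t⁻ᵘ ⋯ t⁻ᵘ h⁻¹`, which is reduced unless
`g ∈ toSubgroup A B u`. -/
theorem mem_toSubgroup_of_t_zpow_conj_eq_of (u : ℤˣ) {i : ℤ} (hi : 0 < i) {g h : G}
    (hgh : t ^ ((u : ℤ) * i) * of g * t ^ (-((u : ℤ) * i)) = (of h : HNNExtension G A B φ)) :
    g ∈ toSubgroup A B u := by
  by_contra hg
  lift i to ℕ using hi.le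
  obtain ⟨s, rfl⟩ := Nat.exists_eq_add_one_of_ne_zero (by omega : i ≠ 0)
  let w : NormalWord.ReducedWord G A B :=
    { head := 1
      toList := List.replicate s (u, 1) ++ (u, g) :: (List.replicate s (-u, 1) ++ [(-u, h⁻¹)])
      chain := by
        simp [List.isChain_append, List.isChain_cons, List.isChain_replicate_of_rel, hg,
          List.getLast?_replicate, List.head?_replicate] }
  have hw : w.prod φ = 1 := by
    simp only [w, NormalWord.ReducedWord.prod, List.map_append, List.map_replicate,
      List.map_cons, List.map_nil, List.prod_append, List.prod_replicate, List.prod_cons,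
      List.prod_nil, Units.val_neg, zpow_neg, map_one, map_inv, mul_one, one_mul, ← hgh]
    group
  simpa [w] using ReducedWord.toList_eq_nil_of_mem_of_range φ w (hw ▸ one_mem _)

end HNNExtension

open Multiplicative

namespace BS

variable {m n : ℤ}

theorem t_mul_a_zpow_mul_t_inv (m n c : ℤ) :
    t m n * a m n ^ (m * c) * (t m n)⁻¹ = a m n ^ (n * c) := by
  have h : PresentedGroup.mk {bsRel m n} (FreeGroup.of true * FreeGroup.of false ^ m *
      (FreeGroup.of true)⁻¹ * (FreeGroup.of false ^ n)⁻¹) = 1 :=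
    PresentedGroup.one_of_mem rfl
  simp only [map_mul, map_zpow, map_inv, mul_inv_eq_one] at h
  rw [zpow_mul, zpow_mul, ← conj_zpow]
  exact congrArg (· ^ c) h

theorem a_zpow_mul_t_pow (m n : ℤ) (s : ℕ) (v : ℤ) :
    a m n ^ (n ^ s * v) * t m n ^ s = t m n ^ s * a m n ^ (m ^ s * v) := by
  induction s generalizing v with
  | zero => simp
  | succ s ih =>
    have hstep : a m n ^ (n * (m ^ s * v)) * t m n = t m n * a m n ^ (m * (m ^ s * v)) := by
      rw [← t_mul_a_zpow_mul_t_inv, inv_mul_cancel_right]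
    calc a m n ^ (n ^ (s + 1) * v) * t m n ^ (s + 1)
        = a m n ^ (n ^ s * (n * v)) * t m n ^ s * t m n := by
          rw [pow_succ n, pow_succ (t m n), mul_assoc (n ^ s), mul_assoc]
      _ = t m n ^ s * (a m n ^ (n * (m ^ s * v)) * t m n) := by
          rw [ih, mul_assoc, mul_left_comm]
      _ = t m n ^ (s + 1) * a m n ^ (m ^ (s + 1) * v) := by
          rw [hstep, ← mul_assoc, ← pow_succ, pow_succ' m, mul_assoc m]

variable {H : Type*} [Group H]

def lift (α τ : H) (h : τ * α ^ m * τ⁻¹ = α ^ n) : BS m n →* H :=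
  PresentedGroup.toGroup (f := fun b => cond b τ α) <| by
    rintro r rfl
    simpa [bsRel, mul_inv_eq_one] using h

@[simp] theorem lift_a (α τ : H) (h : τ * α ^ m * τ⁻¹ = α ^ n) : lift α τ h (a m n) = α :=
  PresentedGroup.toGroup.of _

@[simp] theorem lift_t (α τ : H) (h : τ * α ^ m * τ⁻¹ = α ^ n) : lift α τ h (t m n) = τ :=
  PresentedGroup.toGroup.of _

def height (m n : ℤ) : BS m n →* Multiplicative ℤ := lift 1 (ofAdd 1) (by simp)

@[simp] theorem height_a : height m n (a m n) = 1 := lift_a ..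

@[simp] theorem height_t : height m n (t m n) = ofAdd 1 := lift_t ..

@[simp] theorem height_a_zpow (k : ℤ) : height m n (a m n ^ k) = 1 := by simp

@[simp] theorem height_t_zpow (i : ℤ) : height m n (t m n ^ i) = ofAdd i := by
  rw [map_zpow, height_t, ← Int.ofAdd_mul, one_mul]

def scale (m : ℤ) : Multiplicative ℤ →* Multiplicative ℤ :=
  AddMonoidHom.toMultiplicative (AddMonoidHom.mulLeft m)

theorem scale_injective (hm : m ≠ 0) : Function.Injective (scale m) :=
  fun _ _ h => toAdd.injective (mul_left_cancel₀ hm (ofAdd.injective h))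

theorem dvd_of_ofAdd_mem_range_scale {k : ℤ} (h : ofAdd k ∈ (scale m).range) : m ∣ k := by
  obtain ⟨x, hx⟩ := h
  exact ⟨toAdd x, (ofAdd.injective hx).symm⟩

variable (m n) in
/-- `ℤ` with `mℤ` and `nℤ` identified by the HNN construction (`scale m` is multiplication by
`m`). `BS(m,n)` maps to it, which gives access to Britton's lemma. -/
abbrev HNNModel (hm : m ≠ 0) (hn : n ≠ 0) : Type :=
  HNNExtension (Multiplicative ℤ) (scale m).range (scale n).range
    ((MonoidHom.ofInjective (scale_injective hm)).symm.trans
      (MonoidHom.ofInjective (scale_injective hn)))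

theorem HNNModel.t_mul_of_mul_inv (hm : m ≠ 0) (hn : n ≠ 0) :
    HNNExtension.t * HNNExtension.of (ofAdd m) * HNNExtension.t⁻¹ =
      (HNNExtension.of (ofAdd n) : HNNModel m n hm hn) := by
  have : (HNNExtension.of _ : HNNModel m n hm hn) = _ :=
    HNNExtension.equiv_eq_conj (MonoidHom.ofInjective (scale_injective hm) (ofAdd 1))
  rw [MulEquiv.trans_apply, MulEquiv.symm_apply_apply, MonoidHom.ofInjective_apply,
    MonoidHom.ofInjective_apply] at this
  simpa [scale] using this.symm

noncomputable def toHNNModel (hm : m ≠ 0) (hn : n ≠ 0) : BS m n →* HNNModel m n hm hn :=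
  lift (HNNExtension.of (ofAdd 1)) HNNExtension.t <| by
    simpa only [← map_zpow, ← Int.ofAdd_mul, one_mul] using HNNModel.t_mul_of_mul_inv hm hn

theorem toHNNModel_a_zpow (hm : m ≠ 0) (hn : n ≠ 0) (k : ℤ) :
    toHNNModel hm hn (a m n ^ k) = HNNExtension.of (ofAdd k) := by
  rw [toHNNModel, map_zpow, lift_a, ← map_zpow, ← Int.ofAdd_mul, one_mul]

@[simp] theorem toHNNModel_t (hm : m ≠ 0) (hn : n ≠ 0) :
    toHNNModel hm hn (t m n) = HNNExtension.t :=
  lift_t ..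

theorem a_zpow_injective (hm : m ≠ 0) (hn : n ≠ 0) :
    Function.Injective (a m n ^ · : ℤ → BS m n) := by
  intro k l h
  have := congrArg (toHNNModel hm hn) h
  simp only [toHNNModel_a_zpow] at this
  exact ofAdd.injective (HNNExtension.of_injective _ this)

theorem dvd_of_t_zpow_mul_a_zpow_mul_t_zpow_neg (hm : m ≠ 0) (hn : n ≠ 0) {i k l : ℤ}
    (hi : 0 < i) (h : t m n ^ i * a m n ^ k * t m n ^ (-i) = a m n ^ l) : m ∣ k := by
  have := congrArg (toHNNModel hm hn) h
  rw [map_mul, map_mul, toHNNModel_a_zpow, toHNNModel_a_zpow, map_zpow, map_zpow,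
    toHNNModel_t] at this
  exact dvd_of_ofAdd_mem_range_scale
    (HNNExtension.mem_toSubgroup_of_t_zpow_conj_eq_of 1 hi (by rwa [Units.val_one, one_mul]))

theorem dvd_of_t_zpow_neg_mul_a_zpow_mul_t_zpow (hm : m ≠ 0) (hn : n ≠ 0) {i k l : ℤ}
    (hi : 0 < i) (h : t m n ^ (-i) * a m n ^ k * t m n ^ i = a m n ^ l) : n ∣ k := by
  have := congrArg (toHNNModel hm hn) h
  rw [map_mul, map_mul, toHNNModel_a_zpow, toHNNModel_a_zpow, map_zpow, map_zpow,
    toHNNModel_t] at this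
  exact dvd_of_ofAdd_mem_range_scale
    (HNNExtension.mem_toSubgroup_of_t_zpow_conj_eq_of (-1) hi
      (by rwa [Units.val_neg, Units.val_one, neg_one_mul, neg_neg]))

theorem eq_zero_of_a_zpow_eq_t_zpow (hm : m ≠ 0) (hn : n ≠ 0) {k l : ℤ}
    (h : a m n ^ k = t m n ^ l) : k = 0 := by
  have hl : l = 0 := by simpa using congrArg (height m n) h.symm
  rw [hl, zpow_zero, ← zpow_zero (a m n)] at h
  exact a_zpow_injective hm hn h

theorem t_pow_mul_a_zpow_of_abs_eq_one (hm : |m| = 1) (j : ℕ) (e : ℤ) :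
    t m n ^ j * a m n ^ e = a m n ^ ((m * n) ^ j * e) * t m n ^ j := by
  have hmm : m ^ j * m ^ j = 1 := by rw [← mul_pow, ← abs_mul_abs_self, hm, one_mul, one_pow]
  have := a_zpow_mul_t_pow m n j (m ^ j * e)
  rw [← mul_assoc (m ^ j), hmm, one_mul, ← mul_assoc, ← mul_pow, mul_comm n] at this
  exact this.symm

theorem exists_eq_t_zpow_mul_a_zpow_mul_t_pow (hm : |m| = 1) (g : BS m n) :
    ∃ (i c : ℤ) (j : ℕ), g = t m n ^ i * a m n ^ c * t m n ^ j := by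
  have hg : g ∈ Subgroup.closure (Set.range (PresentedGroup.of : Bool → BS m n)) := by
    rw [PresentedGroup.closure_range_of]; trivial
  induction hg using Subgroup.closure_induction_right with
  | one => exact ⟨0, 0, 0, by simp⟩
  | mul_right x _ y hy ih =>
    obtain ⟨i, c, j, rfl⟩ := ih
    obtain ⟨_ | _, rfl⟩ := hy
    · refine ⟨i, c + (m * n) ^ j, j, ?_⟩
      show _ * a m n = _
      have := t_pow_mul_a_zpow_of_abs_eq_one (n := n) hm j 1
      rw [zpow_one, mul_one] at this
      simp only [mul_assoc, zpow_add]
      exact congrArg _ (congrArg _ this)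
    · exact ⟨i, c, j + 1, by rw [pow_succ, ← mul_assoc]; rfl⟩
  | mul_inv_cancel x _ y hy ih =>
    obtain ⟨i, c, j, rfl⟩ := ih
    obtain ⟨_ | _, rfl⟩ := hy
    · refine ⟨i, c - (m * n) ^ j, j, ?_⟩
      show _ * (a m n)⁻¹ = _
      have := t_pow_mul_a_zpow_of_abs_eq_one (n := n) hm j (-1)
      rw [zpow_neg_one, mul_neg_one] at this
      simp only [mul_assoc, sub_eq_add_neg, zpow_add]
      exact congrArg _ (congrArg _ this)
    · show ∃ (i' c' : ℤ) (j' : ℕ), _ * (t m n)⁻¹ = t m n ^ i' * a m n ^ c' * t m n ^ j'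
      cases j with
      | zero =>
        refine ⟨i - 1, m * n * c, 0, ?_⟩
        have := t_pow_mul_a_zpow_of_abs_eq_one (n := n) hm 1 c
        rw [pow_one, pow_one] at this
        simp only [pow_zero, mul_one]
        rw [eq_mul_inv_of_mul_eq this.symm, zpow_sub_one]
        group
      | succ j => exact ⟨i, c, j, by rw [pow_succ, ← mul_assoc, mul_inv_cancel_right]⟩

end BS

theorem Int.not_dvd_one_of_one_lt_abs {n : ℤ} (hn : 1 < |n|) : ¬n ∣ 1 :=
  fun h => hn.ne' (Int.isUnit_iff_abs_eq.mp (isUnit_of_dvd_one h))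

theorem setOf_mul_zpow_mul_zpow_eq {G : Type*} [Group G] (g c : G) (i : ℤ) :
    {y | ∃ j : ℤ, y = g * c ^ i * c ^ j} = {y | ∃ j : ℤ, y = g * c ^ j} := by
  ext y
  constructor
  · rintro ⟨j, rfl⟩
    exact ⟨i + j, by rw [zpow_add, mul_assoc]⟩
  · rintro ⟨j, rfl⟩
    exact ⟨j - i, by rw [mul_assoc, ← zpow_add, add_sub_cancel]⟩

section Lines

variable {m n : ℤ}

theorem mem_aLine_self (g : BS m n) : g ∈ aLine m n g := ⟨0, by simp⟩

theorem mem_tLine_self (g : BS m n) : g ∈ tLine m n g := ⟨0, by simp⟩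

theorem aLine_eq_of_mem {g x : BS m n} (h : x ∈ aLine m n g) : aLine m n x = aLine m n g := by
  obtain ⟨i, rfl⟩ := h
  exact setOf_mul_zpow_mul_zpow_eq g _ i

theorem tLine_eq_of_mem {g x : BS m n} (h : x ∈ tLine m n g) : tLine m n x = tLine m n g := by
  obtain ⟨i, rfl⟩ := h
  exact setOf_mul_zpow_mul_zpow_eq g _ i

theorem aLine_ne_tLine (g h : BS m n) : aLine m n g ≠ tLine m n h := by
  intro he
  have hg : tLine m n g = aLine m n g := by rw [he, tLine_eq_of_mem (he ▸ mem_aLine_self g)]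
  obtain ⟨i, hi⟩ : g * BS.t m n ∈ aLine m n g := hg ▸ ⟨1, by rw [zpow_one]⟩
  have : BS.t m n ^ (1 : ℤ) = BS.a m n ^ i := by rw [zpow_one]; exact mul_left_cancel hi
  simpa using congrArg (BS.height m n) this

theorem IsStandardLine.eq_aLine_or_eq_tLine {ℓ : Set (BS m n)} (hℓ : IsStandardLine m n ℓ)
    {x : BS m n} (hx : x ∈ ℓ) : ℓ = aLine m n x ∨ ℓ = tLine m n x := by
  rcases hℓ with ⟨g, rfl⟩ | ⟨g, rfl⟩
  · exact Or.inl (aLine_eq_of_mem hx).symm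
  · exact Or.inr (tLine_eq_of_mem hx).symm

end Lines

theorem Subgroup.iff_one_of_forall_mul_iff {G : Type*} [Group G] {S : Set G}
    (hS : Subgroup.closure S = ⊤) {P : G → Prop} (hP : ∀ g, ∀ s ∈ S, P (g * s) ↔ P g) (g : G) :
    P g ↔ P 1 := by
  have hg : g ∈ Subgroup.closure S := hS ▸ Subgroup.mem_top g
  induction hg using Subgroup.closure_induction_right with
  | one => rfl
  | mul_right x _ s hs ih => exact (hP x s hs).trans ih
  | mul_inv_cancel x _ s hs ih =>
    have h := hP (x * s⁻¹) s hs
    rw [inv_mul_cancel_right] at h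
    exact h.symm.trans ih

section LabelDichotomy

variable {m n m' n' : ℤ} {φ : BS m n → BS m' n'}

theorem LinePreserving.image_aLine_eq (hlp : LinePreserving φ) (g : BS m n) :
    φ '' aLine m n g = aLine m' n' (φ g) ∨ φ '' aLine m n g = tLine m' n' (φ g) :=
  (hlp _ (Or.inl ⟨g, rfl⟩)).eq_aLine_or_eq_tLine (Set.mem_image_of_mem φ (mem_aLine_self g))

theorem LinePreserving.image_tLine_eq (hlp : LinePreserving φ) (g : BS m n) :
    φ '' tLine m n g = aLine m' n' (φ g) ∨ φ '' tLine m n g = tLine m' n' (φ g) :=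
  (hlp _ (Or.inr ⟨g, rfl⟩)).eq_aLine_or_eq_tLine (Set.mem_image_of_mem φ (mem_tLine_self g))

theorem LinePreserving.exists_image_aLine_iff (hlp : LinePreserving φ)
    (hφ : Function.Injective φ) (g : BS m n) :
    (∃ h, φ '' aLine m n g = aLine m' n' h) ↔ (∃ h, φ '' tLine m n g = tLine m' n' h) := by
  have hne : φ '' aLine m n g ≠ φ '' tLine m n g :=
    fun h => aLine_ne_tLine g g (Set.image_injective.mpr hφ h)
  rcases hlp.image_aLine_eq g with hA | hA <;> rcases hlp.image_tLine_eq g with hT | hT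
  · exact absurd (hA.trans hT.symm) hne
  · exact iff_of_true ⟨_, hA⟩ ⟨_, hT⟩
  · exact iff_of_false (fun ⟨h, hA'⟩ => aLine_ne_tLine h _ (hA'.symm.trans hA))
      (fun ⟨h, hT'⟩ => aLine_ne_tLine _ h (hT.symm.trans hT'))
  · exact absurd (hA.trans hT.symm) hne

def SwapsLabels (φ : BS m n → BS m' n') : Prop :=
  ∀ g, φ '' aLine m n g = tLine m' n' (φ g) ∧ φ '' tLine m n g = aLine m' n' (φ g)

theorem LinePreserving.preservesLabels_or_swapsLabels (hlp : LinePreserving φ)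
    (hφ : Function.Injective φ) :
    (∀ g, (∃ h, φ '' aLine m n g = aLine m' n' h) ∧ (∃ h, φ '' tLine m n g = tLine m' n' h)) ∨
      SwapsLabels φ := by
  have hconst := Subgroup.iff_one_of_forall_mul_iff (PresentedGroup.closure_range_of _)
    (P := fun g => ∃ h, φ '' aLine m n g = aLine m' n' h) <| by
    rintro g _ ⟨_ | _, rfl⟩
    · rw [aLine_eq_of_mem ⟨1, by rw [zpow_one]; rfl⟩]
    · simp only [hlp.exists_image_aLine_iff hφ]
      rw [tLine_eq_of_mem ⟨1, by rw [zpow_one]; rfl⟩]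
  by_cases h1 : ∃ h, φ '' aLine m n 1 = aLine m' n' h
  · exact Or.inl fun g => ⟨(hconst g).2 h1, (hlp.exists_image_aLine_iff hφ g).1 ((hconst g).2 h1)⟩
  · refine Or.inr fun g => ⟨?_, ?_⟩
    · exact (hlp.image_aLine_eq g).resolve_left fun h => h1 ((hconst g).1 ⟨_, h⟩)
    · refine (hlp.image_tLine_eq g).resolve_right fun h => h1 ((hconst g).1 ?_)
      exact (hlp.exists_image_aLine_iff hφ g).2 ⟨_, h⟩

theorem SwapsLabels.meets_iff (hs : SwapsLabels φ) (hφ : Function.Injective φ) (z g : BS m n) :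
    (tLine m n z ∩ aLine m n g).Nonempty ↔ (aLine m' n' (φ z) ∩ tLine m' n' (φ g)).Nonempty := by
  rw [← (hs z).2, ← (hs g).1, ← Set.image_inter hφ, Set.image_nonempty]

theorem SwapsLabels.tLine_eq_iff (hs : SwapsLabels φ) (hφ : Function.Injective φ) (z z' : BS m n) :
    tLine m n z = tLine m n z' ↔ aLine m' n' (φ z) = aLine m' n' (φ z') := by
  rw [← (hs z).2, ← (hs z').2, (Set.image_injective.mpr hφ).eq_iff]

end LabelDichotomy

section Geometry

variable {m n : ℤ}

open BS

theorem exists_tLine_ne_meets_aLine_and_aLine_mul_t_pow (hm : m ≠ 0) (hn : n ≠ 0)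
    (x : BS m n) (s : ℕ) :
    ∃ z, tLine m n z ≠ tLine m n x ∧ (tLine m n z ∩ aLine m n x).Nonempty ∧
      (tLine m n z ∩ aLine m n (x * t m n ^ s)).Nonempty := by
  refine ⟨x * a m n ^ (n ^ s), fun h => ?_, ⟨_, mem_tLine_self _, n ^ s, rfl⟩,
    ⟨_, ⟨s, rfl⟩, m ^ s, ?_⟩⟩
  · obtain ⟨j, hj⟩ : x * a m n ^ (n ^ s) ∈ tLine m n x := h ▸ mem_tLine_self _
    exact pow_ne_zero s hn (eq_zero_of_a_zpow_eq_t_zpow hm hn (mul_left_cancel hj))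
  · have := a_zpow_mul_t_pow m n s 1
    rw [mul_one, mul_one] at this
    rw [mul_assoc, zpow_natCast, this, mul_assoc]

theorem exists_tLine_ne_meets_of_meets (hm : m ≠ 0) (hn : n ≠ 0) {z g₁ g₂ : BS m n}
    (h₁ : (tLine m n z ∩ aLine m n g₁).Nonempty) (h₂ : (tLine m n z ∩ aLine m n g₂).Nonempty) :
    ∃ z', tLine m n z' ≠ tLine m n z ∧ (tLine m n z' ∩ aLine m n g₁).Nonempty ∧
      (tLine m n z' ∩ aLine m n g₂).Nonempty := by
  obtain ⟨_, ⟨i, rfl⟩, hx⟩ := h₁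
  obtain ⟨_, ⟨j, rfl⟩, hy⟩ := h₂
  wlog hij : i ≤ j generalizing g₁ g₂ i j
  · obtain ⟨z', hne, h₂', h₁'⟩ := this j hy i hx (le_of_not_ge hij)
    exact ⟨z', hne, h₁', h₂'⟩
  obtain ⟨s, rfl⟩ : ∃ s : ℕ, j = i + s := ⟨(j - i).toNat, by omega⟩
  obtain ⟨z', hne, h₁', h₂'⟩ :=
    exists_tLine_ne_meets_aLine_and_aLine_mul_t_pow hm hn (z * t m n ^ i) s
  rw [tLine_eq_of_mem ⟨i, rfl⟩] at hne
  rw [aLine_eq_of_mem hx] at h₁'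
  rw [mul_assoc, ← zpow_natCast, ← zpow_add, aLine_eq_of_mem hy] at h₂'
  exact ⟨z', hne, h₁', h₂'⟩

theorem not_meets_aLine_one_and_aLine_t_inv_mul_a_mul_t (hm : m ≠ 0) (hn : 1 < |n|)
    (z : BS m n) :
    ¬((tLine m n z ∩ aLine m n 1).Nonempty ∧
      (tLine m n z ∩ aLine m n ((t m n)⁻¹ * a m n * t m n)).Nonempty) := by
  rintro ⟨⟨_, ⟨i, rfl⟩, u, hu⟩, ⟨_, ⟨j, rfl⟩, v, hv⟩⟩
  rw [one_mul] at hu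
  have hconj : (t m n)⁻¹ * a m n * t m n = a m n ^ u * t m n ^ (j - i) * a m n ^ (-v) := by
    calc (t m n)⁻¹ * a m n * t m n = z * t m n ^ j * a m n ^ (-v) := by rw [hv]; group
      _ = z * t m n ^ i * t m n ^ (j - i) * a m n ^ (-v) := by group
      _ = _ := by rw [hu]
  have hij : j - i = 0 := by
    simpa [eq_comm] using congrArg (fun g => toAdd (height m n g)) hconj
  rw [hij, zpow_zero, mul_one, ← zpow_add] at hconj
  exact Int.not_dvd_one_of_one_lt_abs hn <| dvd_of_t_zpow_neg_mul_a_zpow_mul_t_zpow hm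
    (abs_pos.mp (one_pos.trans hn)) one_pos (by simpa using hconj)

theorem aLine_eq_aLine_one_of_meets (hm : 1 < |m|) (hn : 1 < |n|) {x : BS m n}
    (h₁ : (aLine m n x ∩ tLine m n 1).Nonempty)
    (h₂ : (aLine m n x ∩ tLine m n (a m n)).Nonempty) :
    aLine m n x = aLine m n 1 := by
  have hm₀ : m ≠ 0 := abs_pos.mp (one_pos.trans hm)
  have hn₀ : n ≠ 0 := abs_pos.mp (one_pos.trans hn)
  obtain ⟨_, hpx, i, rfl⟩ := h₁
  obtain ⟨_, hqx, j, rfl⟩ := h₂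
  rw [← aLine_eq_of_mem hpx] at hqx ⊢
  obtain ⟨w, hw⟩ := hqx
  rw [one_mul] at hw ⊢
  obtain rfl : j = i := by simpa using congrArg (height m n) hw
  have hconj : t m n ^ (-j) * a m n ^ (1 : ℤ) * t m n ^ j = a m n ^ w := by
    rw [zpow_one, mul_assoc, hw]; group
  rcases lt_trichotomy j 0 with hj | rfl | hj
  · exact absurd (dvd_of_t_zpow_mul_a_zpow_mul_t_zpow_neg hm₀ hn₀ (neg_pos.mpr hj)
      (by rwa [neg_neg])) (Int.not_dvd_one_of_one_lt_abs hm)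
  · rw [zpow_zero]
  · exact absurd (dvd_of_t_zpow_neg_mul_a_zpow_mul_t_zpow hm₀ hn₀ hj hconj)
      (Int.not_dvd_one_of_one_lt_abs hn)

theorem exists_aLine_meets_tLine_and_tLine (hm : |m| = 1) (x y : BS m n) :
    ∃ w, (aLine m n w ∩ tLine m n x).Nonempty ∧ (aLine m n w ∩ tLine m n y).Nonempty := by
  obtain ⟨i, c, j, hxy⟩ := exists_eq_t_zpow_mul_a_zpow_mul_t_pow hm (x⁻¹ * y)
  rw [inv_mul_eq_iff_eq_mul] at hxy
  refine ⟨x * t m n ^ i, ⟨_, mem_aLine_self _, i, rfl⟩, ⟨_, ⟨c, rfl⟩, -(j : ℤ), ?_⟩⟩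
  rw [hxy]
  group

end Geometry

section NoSwap

variable {m n m' n' : ℤ} {φ : BS m n → BS m' n'}

theorem not_swapsLabels_of_abs_eq_one (hm : m ≠ 0) (hn : 1 < |n|) (hm' : |m'| = 1)
    (hφ : Function.Bijective φ) : ¬SwapsLabels φ := by
  intro hs
  obtain ⟨w, hw₁, hw₂⟩ := exists_aLine_meets_tLine_and_tLine hm' (φ 1)
    (φ ((BS.t m n)⁻¹ * BS.a m n * BS.t m n))
  obtain ⟨z, rfl⟩ := hφ.2 w
  exact not_meets_aLine_one_and_aLine_t_inv_mul_a_mul_t hm hn z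
    ⟨(hs.meets_iff hφ.1 _ _).2 hw₁, (hs.meets_iff hφ.1 _ _).2 hw₂⟩

theorem not_swapsLabels_of_one_lt_abs (hm : m ≠ 0) (hn : n ≠ 0) (hm' : 1 < |m'|)
    (hn' : 1 < |n'|) (hφ : Function.Bijective φ) : ¬SwapsLabels φ := by
  intro hs
  obtain ⟨y₁, hy₁⟩ := hφ.2 1
  obtain ⟨y₂, hy₂⟩ := hφ.2 (BS.a m' n')
  have h₁ : (tLine m n y₁ ∩ aLine m n y₁).Nonempty := ⟨y₁, mem_tLine_self _, mem_aLine_self _⟩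
  have h₂ : (tLine m n y₁ ∩ aLine m n y₂).Nonempty := by
    rw [hs.meets_iff hφ.1, hy₁, hy₂]
    exact ⟨BS.a m' n', ⟨1, by rw [one_mul, zpow_one]⟩, mem_tLine_self _⟩
  obtain ⟨z, hne, hz₁, hz₂⟩ := exists_tLine_ne_meets_of_meets hm hn h₁ h₂
  rw [hs.meets_iff hφ.1, hy₁] at hz₁
  rw [hs.meets_iff hφ.1, hy₂] at hz₂
  exact hne ((hs.tLine_eq_iff hφ.1 _ _).2
    (by rw [hy₁, aLine_eq_aLine_one_of_meets hm' hn' hz₁ hz₂]))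

end NoSwap

theorem linePreserving_preserves_labels_general (m n m' n' : ℤ)
    (hm : m ≠ 0) (hm' : m' ≠ 0)
    (hmn : |m| < |n|) (hmn' : |m'| < |n'|)
    (φ : BS m n → BS m' n') (hbij : Function.Bijective φ) (hlp : LinePreserving φ) :
    ∀ g : BS m n,
      (∃ h : BS m' n', φ '' aLine m n g = aLine m' n' h) ∧
      (∃ h : BS m' n', φ '' tLine m n g = tLine m' n' h) := by
  have hn : 1 < |n| := (Int.one_le_abs hm).trans_lt hmn
  refine (hlp.preservesLabels_or_swapsLabels hbij.1).resolve_right fun hs => ?_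
  rcases (Int.one_le_abs hm').eq_or_lt with hm'₁ | hm'₁
  · exact not_swapsLabels_of_abs_eq_one hm hn hm'₁.symm hbij hs
  · exact not_swapsLabels_of_one_lt_abs hm (abs_pos.mp (one_pos.trans hn)) hm'₁
      (hm'₁.trans hmn') hbij hs

/-- A line-preserving bijection `φ : BS(m,n) → BS(m',n')` (with
`|m| < |n|`, `|m'| < |n'|`, all nonzero) preserves the labels of standard lines: the image of
every `a`-line is an `a`-line and the image of every `t`-line is a `t`-line. -/
theorem linePreserving_preserves_labels (m n m' n' : ℤ)
    (hm : m ≠ 0) (hn : n ≠ 0) (hm' : m' ≠ 0) (hn' : n' ≠ 0)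
    (hmn : |m| < |n|) (hmn' : |m'| < |n'|)
    (φ : BS m n → BS m' n') (hbij : Function.Bijective φ) (hlp : LinePreserving φ) :
    ∀ g : BS m n,
      (∃ h : BS m' n', φ '' aLine m n g = aLine m' n' h) ∧
      (∃ h : BS m' n', φ '' tLine m n g = tLine m' n' h) :=
  linePreserving_preserves_labels_general m n m' n' hm hm' hmn hmn' φ hbij hlp
end

section
/- Let m, n be nonzero integers with |m| ≠ |n|. Then in BS(m,n), the cyclic subgroup ⟨t⟩ intersects every conjugate of the cyclic subgroup ⟨a⟩ trivially: for every g ∈ BS(m,n), one has ⟨t⟩ ∩ g⟨a⟩g⁻¹ = {1}. -/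
/-- For `|m| ≠ |n|` (both nonzero), in `BS(m,n)` the subgroup `⟨t⟩`
intersects every conjugate of `⟨a⟩` trivially. -/
theorem zpowers_t_inf_conj_zpowers_a_eq_bot (m n : ℤ) (hm : m ≠ 0) (hn : n ≠ 0)
    (hmn : |m| ≠ |n|) (g : BS m n) :
    Subgroup.zpowers (BS.t m n) ⊓
      (Subgroup.zpowers (BS.a m n)).map (MulAut.conj g).toMonoidHom = ⊥ := by
  classical
  -- the homomorphism counting the exponent sum of `t`
  have hrel : ∀ r ∈ ({bsRel m n} : Set (FreeGroup Bool)),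
      FreeGroup.lift (fun b : Bool => if b then Multiplicative.ofAdd (1 : ℤ) else 1) r = 1 := by
    intro r hr
    rcases hr with rfl
    simp [bsRel, map_mul, map_zpow, one_zpow]
  let φ : BS m n →* Multiplicative ℤ := PresentedGroup.toGroup hrel
  have hφa : φ (BS.a m n) = 1 := by
    have h := PresentedGroup.toGroup.of (f := fun b : Bool =>
      if b then Multiplicative.ofAdd (1 : ℤ) else 1) hrel (x := false)
    simpa [BS.a, φ] using h
  have hφt : φ (BS.t m n) = Multiplicative.ofAdd (1 : ℤ) := by
    have h := PresentedGroup.toGroup.of (f := fun b : Bool =>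
      if b then Multiplicative.ofAdd (1 : ℤ) else 1) hrel (x := true)
    simpa [BS.t, φ] using h
  ext x
  simp only [Subgroup.mem_inf, Subgroup.mem_bot, Subgroup.mem_map]
  constructor
  · rintro ⟨⟨k, rfl⟩, y, hy, heq⟩
    rcases Subgroup.mem_zpowers_iff.mp hy with ⟨i, rfl⟩
    beta_reduce at heq
    have h1 : φ (BS.t m n ^ k) = Multiplicative.ofAdd k := by
      rw [map_zpow, hφt]
      rw [← ofAdd_zsmul]
      simp
    have h2 : φ (BS.t m n ^ k) = 1 := by
      rw [← heq]
      simp [map_zpow, hφa]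
    have hk : k = 0 := by
      have := h1.symm.trans h2
      simpa using this
    simp [hk]
  · rintro rfl
    exact ⟨⟨0, by simp⟩, 1, Subgroup.one_mem _, by simp⟩
end

section
/- Let m, n be nonzero integers. Then in BS(m,n), the cyclic subgroup ⟨a⟩ is commensurated: for every g ∈ BS(m,n), the intersection g⟨a⟩g⁻¹ ∩ ⟨a⟩ has finite index both in ⟨a⟩ and in g⟨a⟩g⁻¹. -/
/-!
Every generator of `BS(m,n)` conjugates a nonzero power of `a` to a nonzero power of `a`:
trivially for `a`, and `t a^m t⁻¹ = a^n` for `t`. For any element `x` of a group, such a `g`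
lies in the commensurator of `⟨x⟩`, because `⟨x^p⟩` has finite index in `⟨x⟩` for `p ≠ 0`,
so `g⟨x⟩g⁻¹ ~ g⟨x^p⟩g⁻¹ = ⟨x^q⟩ ~ ⟨x⟩`. The commensurator is a subgroup, so it contains the
whole group generated by `a` and `t`.
-/

open Subgroup
open scoped Pointwise

section Commensurator

variable {G : Type*} [Group G]

lemma relIndex_zpowers_zpow_ne_zero (x : G) {q : ℤ} (hq : q ≠ 0) :
    (zpowers (x ^ q)).relIndex (zpowers x) ≠ 0 := by
  have hindex : (zpowers (Multiplicative.ofAdd q)).index = q.natAbs := by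
    rw [← index_toAddSubgroup, ← Int.index_zmultiples]
    rfl
  have hle : zpowers (Multiplicative.ofAdd q) ≤ (zpowers (x ^ q)).comap (zpowersHom G x) :=
    zpowers_le.mpr (by simp)
  rw [← range_zpowersHom x, MonoidHom.range_eq_map, ← relIndex_comap, relIndex_top_right]
  exact ne_zero_of_dvd_ne_zero (Int.natAbs_ne_zero.mpr hq) (hindex ▸ index_dvd_of_le hle)

lemma commensurable_zpowers_zpow (x : G) {q : ℤ} (hq : q ≠ 0) :
    Commensurable (zpowers (x ^ q)) (zpowers x) :=
  ⟨relIndex_zpowers_zpow_ne_zero x hq,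
    relIndex_eq_one.mpr (zpowers_le.mpr (zpow_mem (mem_zpowers x) q)) ▸ one_ne_zero⟩

lemma mem_commensurator_zpowers_of_conj_zpow {x g : G} {p q : ℤ} (hp : p ≠ 0) (hq : q ≠ 0)
    (h : g * x ^ p * g⁻¹ = x ^ q) : g ∈ Commensurable.commensurator (zpowers x) := by
  have hconj : ConjAct.toConjAct g • zpowers (x ^ p) = zpowers (x ^ q) :=
    (MonoidHom.map_zpowers (MulAut.conj g).toMonoidHom _).trans (congrArg zpowers h)
  exact ((commensurable_zpowers_zpow x hp).conj _).symm.trans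
    (hconj ▸ commensurable_zpowers_zpow x hq)

end Commensurator

lemma BS.t_mul_a_zpow_mul_t_inv_s16 (m n : ℤ) :
    BS.t m n * BS.a m n ^ m * (BS.t m n)⁻¹ = BS.a m n ^ n := by
  have h : PresentedGroup.mk ({bsRel m n} : Set (FreeGroup Bool)) (bsRel m n) = 1 :=
    (QuotientGroup.eq_one_iff _).mpr (subset_normalClosure (Set.mem_singleton _))
  rw [bsRel] at h
  simp only [map_mul, map_zpow, map_inv] at h
  exact mul_inv_eq_one.mp h

lemma BS.commensurator_zpowers_a (m n : ℤ) (hm : m ≠ 0) (hn : n ≠ 0) :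
    Commensurable.commensurator (zpowers (BS.a m n)) = ⊤ := by
  rw [eq_top_iff, ← PresentedGroup.closure_range_of, closure_le, Set.range_subset_iff]
  rintro (_ | _)
  · exact mem_commensurator_zpowers_of_conj_zpow (g := BS.a m n) one_ne_zero one_ne_zero
      (by group)
  · exact mem_commensurator_zpowers_of_conj_zpow hm hn (BS.t_mul_a_zpow_mul_t_inv_s16 m n)

/-- For any nonzero `m, n`, the subgroup `⟨a⟩` of `BS(m,n)` is
commensurated: for every `g`, the intersection `g⟨a⟩g⁻¹ ∩ ⟨a⟩` has finite index both in
`⟨a⟩` and in `g⟨a⟩g⁻¹`. (`Subgroup.relindex H K = 0` encodes infinite index.) -/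
theorem zpowers_a_commensurated (m n : ℤ) (hm : m ≠ 0) (hn : n ≠ 0) (g : BS m n) :
    ((Subgroup.zpowers (BS.a m n)).map (MulAut.conj g).toMonoidHom ⊓
        Subgroup.zpowers (BS.a m n)).relIndex (Subgroup.zpowers (BS.a m n)) ≠ 0 ∧
    ((Subgroup.zpowers (BS.a m n)).map (MulAut.conj g).toMonoidHom ⊓
        Subgroup.zpowers (BS.a m n)).relIndex
      ((Subgroup.zpowers (BS.a m n)).map (MulAut.conj g).toMonoidHom) ≠ 0 := by
  have hg : g ∈ Commensurable.commensurator (zpowers (BS.a m n)) :=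
    BS.commensurator_zpowers_a m n hm hn ▸ mem_top g
  rw [inf_relIndex_right, inf_relIndex_left]
  exact hg
end

section
/- Let G be a countable group acting by measurable, measure-preserving bijections on a measure space (Y, μ) with μ a finite measure. Let H₁ ≤ H₂ be subgroups of G with H₁ of infinite index in H₂, and let U ⊆ Y be a measurable subset with μ(U) > 0. Then there exists a measurable subset U' ⊆ U with μ(U') > 0 such that for every y ∈ U', the collection of right cosets {H₁h : h ∈ H₂ and h·y ∈ U} is infinite. -/
open MeasureTheory Finset
open scoped ENNReal Pointwise

/-!
For a finite `F ⊆ G`, let `W_F` be the set of points of `U` all of whose `H₂`-return times to `U`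
lie in `H₁ F`. Pick `gₙ ∈ H₂` in pairwise distinct right cosets of `H₁`. The preimages `gₙ⁻¹ W_F`
all have measure `μ W_F`, but a point lying in those with indices `n₀` and `m` gives the return
time `gₘ gₙ₀⁻¹ ∈ H₁ F`, so no point lies in more than `|F|` of them; finiteness of `μ` forces
`μ W_F = 0`. Since `G` is countable, `U' = U \ ⋃_F W_F` works.
-/

theorem Subgroup.exists_seq_mem_mul_inv_notMem_of_relIndex_eq_zero {G : Type*} [Group G]
    {H₁ H₂ : Subgroup G} (hinf : H₁.relIndex H₂ = 0) :
    ∃ g : ℕ → G, (∀ n, g n ∈ H₂) ∧ ∀ m n, g m * (g n)⁻¹ ∈ H₁ → m = n := by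
  have : Infinite (H₂ ⧸ H₁.subgroupOf H₂) := Subgroup.index_eq_zero_iff_infinite.mp hinf
  let e := Infinite.natEmbedding (H₂ ⧸ H₁.subgroupOf H₂)
  choose k hk using fun n => QuotientGroup.mk_surjective (e n)
  refine ⟨fun n => ((k n)⁻¹ : H₂), fun n => ((k n)⁻¹).2, fun m n hmn => e.injective ?_⟩
  rw [← hk m, ← hk n, QuotientGroup.eq, Subgroup.mem_subgroupOf]
  simpa using hmn

theorem card_le_card_of_mul_inv_mem_imp_eq {G ι : Type*} [Group G] {H : Subgroup G}
    {g : ι → G} (hg : ∀ i j, g i * (g j)⁻¹ ∈ H → i = j) (F : Finset G) (s : Finset ι)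
    (hs : ∀ i ∈ s, g i ∈ (H : Set G) * F) : #s ≤ #F := by
  have hrep : ∀ i ∈ s, ∃ c ∈ F, g i * c⁻¹ ∈ H := by
    intro i hi
    obtain ⟨a, ha, c, hc, hac⟩ := hs i hi
    exact ⟨c, hc, by rw [← hac, mul_inv_cancel_right]; exact ha⟩
  choose! c hcF hcH using hrep
  refine card_le_card_of_injOn c hcF fun i hi j hj hij => hg i j ?_
  have := H.mul_mem (hcH i hi) (H.inv_mem (hcH j hj))
  rwa [hij, mul_inv_rev, inv_inv, mul_assoc, inv_mul_cancel_left] at this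

theorem MeasureTheory.sum_measure_le_mul_measure_univ_of_card_le {Y ι : Type*}
    [MeasurableSpace Y] (μ : Measure Y) {s : Finset ι} {A : ι → Set Y}
    (hA : ∀ i ∈ s, MeasurableSet (A i)) {k : ℕ}
    (hk : ∀ y (t : Finset ι), (∀ i ∈ t, y ∈ A i) → #t ≤ k) :
    ∑ i ∈ s, μ (A i) ≤ k * μ Set.univ := by
  classical
  calc ∑ i ∈ s, μ (A i) = ∫⁻ y, ∑ i ∈ s, (A i).indicator 1 y ∂μ := by
        rw [lintegral_finsetSum _ fun i hi => measurable_one.indicator (hA i hi)]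
        exact sum_congr rfl fun i hi => (lintegral_indicator_one (hA i hi)).symm
    _ = ∫⁻ y, (#{i ∈ s | y ∈ A i} : ℝ≥0∞) ∂μ := by
        simp [Set.indicator_apply, Finset.sum_boole]
    _ ≤ ∫⁻ _, (k : ℝ≥0∞) ∂μ :=
        lintegral_mono fun y => Nat.cast_le.mpr (hk y _ fun i hi => (mem_filter.mp hi).2)
    _ = k * μ Set.univ := lintegral_const _

theorem MeasureTheory.measure_eq_zero_of_card_preimage_le {Y : Type*} [MeasurableSpace Y]
    {μ : Measure Y} [IsFiniteMeasure μ] {s : Set Y} (hs : MeasurableSet s)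
    {T : ℕ → Y → Y} (hT : ∀ n, MeasurePreserving (T n) μ μ) (k : ℕ)
    (hk : ∀ y (t : Finset ℕ), (∀ n ∈ t, T n y ∈ s) → #t ≤ k) : μ s = 0 := by
  by_contra hne
  obtain ⟨N, hN⟩ := ENNReal.exists_nat_mul_gt hne
    (ENNReal.mul_ne_top (ENNReal.natCast_ne_top k) (measure_ne_top μ Set.univ))
  refine hN.not_ge ?_
  calc (N : ℝ≥0∞) * μ s = ∑ n ∈ range N, μ (T n ⁻¹' s) := by
        simp [(hT _).measure_preimage hs.nullMeasurableSet]
    _ ≤ k * μ Set.univ :=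
        sum_measure_le_mul_measure_univ_of_card_le μ (fun n _ => (hT n).measurable hs) hk

theorem Set.Finite.exists_finset_subset_mul_of_rightCosets {G : Type*} [Group G]
    {H : Subgroup G} {S : Set G}
    (hS : ((fun h => (· * h) '' (H : Set G)) '' S).Finite) :
    ∃ F : Finset G, S ⊆ (H : Set G) * F := by
  obtain ⟨T, hTS, hT, hTeq⟩ :=
    Set.exists_subset_image_finite_and.mp ⟨_, subset_rfl, hS, rfl⟩
  refine ⟨hT.toFinset, fun h hh => ?_⟩
  obtain ⟨t, ht, hth⟩ := hTeq ▸ Set.mem_image_of_mem _ hh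
  obtain ⟨a, ha, rfl⟩ : h ∈ (· * t) '' (H : Set G) := by
    rw [show (· * t) '' (H : Set G) = _ from hth]; exact ⟨1, H.one_mem, one_mul h⟩
  exact Set.mul_mem_mul ha (by simpa using ht)

namespace MulAction

variable {G Y : Type*} [Group G] [MulAction G Y]

def returnsWithin (H : Subgroup G) (U : Set Y) (K : Set G) : Set Y :=
  {y ∈ U | ∀ h ∈ H, h • y ∈ U → h ∈ K}

theorem measurableSet_returnsWithin [Countable G] [MeasurableSpace Y]
    (hmeas : ∀ g : G, Measurable (g • · : Y → Y)) (H : Subgroup G) {U : Set Y}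
    (hU : MeasurableSet U) (K : Set G) : MeasurableSet (returnsWithin H U K) :=
  hU.mem.and (Measurable.forall fun h =>
    measurable_const.imp ((hU.preimage (hmeas h)).mem.imp measurable_const)) |>.setOf

theorem measure_returnsWithin_mul_eq_zero [Countable G] [MeasurableSpace Y] {μ : Measure Y}
    [IsFiniteMeasure μ] (hpres : ∀ g : G, MeasurePreserving (g • · : Y → Y) μ μ)
    {H₁ H₂ : Subgroup G} (hinf : H₁.relIndex H₂ = 0) {U : Set Y} (hU : MeasurableSet U)
    (F : Finset G) : μ (returnsWithin H₂ U ((H₁ : Set G) * F)) = 0 := by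
  obtain ⟨g, hgH₂, hg⟩ := Subgroup.exists_seq_mem_mul_inv_notMem_of_relIndex_eq_zero hinf
  refine measure_eq_zero_of_card_preimage_le
    (measurableSet_returnsWithin (fun g => (hpres g).measurable) H₂ hU _)
    (fun n => hpres (g n)) #F fun y t ht => ?_
  rcases t.eq_empty_or_nonempty with rfl | ⟨n₀, hn₀⟩
  · simp
  have hg' : ∀ i j, g i * (g n₀)⁻¹ * (g j * (g n₀)⁻¹)⁻¹ ∈ H₁ → i = j := fun i j hij =>
    hg i j (by simpa [mul_assoc] using hij)
  -- `g m * (g n₀)⁻¹` is a return time of `g n₀ • y`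
  refine card_le_card_of_mul_inv_mem_imp_eq hg' F t fun m hm =>
    (ht n₀ hn₀).2 _ (H₂.mul_mem (hgH₂ m) (H₂.inv_mem (hgH₂ n₀))) ?_
  rw [smul_smul, inv_mul_cancel_right]
  exact (ht m hm).1

end MulAction

open MulAction in
theorem actionLike_cocycle_of_pmp_action_general {G : Type*} [Group G] [Countable G]
    {Y : Type*} [MeasurableSpace Y] (μ : Measure Y) [IsFiniteMeasure μ]
    [MulAction G Y]
    (hpres : ∀ g : G, MeasurePreserving (fun y : Y => g • y) μ μ)
    (H₁ H₂ : Subgroup G) (hinf : H₁.relIndex H₂ = 0)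
    (U : Set Y) (hU : MeasurableSet U) (hUpos : 0 < μ U) :
    ∃ U' : Set Y, U' ⊆ U ∧ MeasurableSet U' ∧ 0 < μ U' ∧
      ∀ y ∈ U',
        {s : Set G | ∃ h : G, h ∈ H₂ ∧ h • y ∈ U ∧
          s = (fun x : G => x * h) '' (H₁ : Set G)}.Infinite := by
  set W := ⋃ F : Finset G, returnsWithin H₂ U ((H₁ : Set G) * F)
  have hW : μ W = 0 :=
    measure_iUnion_null fun F => measure_returnsWithin_mul_eq_zero hpres hinf hU F
  refine ⟨U \ W, Set.sdiff_subset,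
    hU.diff (.iUnion fun F => measurableSet_returnsWithin (fun g => (hpres g).measurable) H₂ hU _),
    by rwa [measure_sdiff_null hW], fun y hy hfin => ?_⟩
  have hcosets : ((fun h => (· * h) '' (H₁ : Set G)) '' {h | h ∈ H₂ ∧ h • y ∈ U}).Finite :=
    hfin.subset (by rintro _ ⟨h, ⟨hh, hhy⟩, rfl⟩; exact ⟨h, hh, hhy, rfl⟩)
  obtain ⟨F, hF⟩ := hcosets.exists_finset_subset_mul_of_rightCosets
  exact hy.2 (Set.mem_iUnion.mpr ⟨F, hy.1, fun h hh hhy => hF ⟨hh, hhy⟩⟩)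

/-- Let a countable group `G` act by measurable, measure-preserving
bijections on a finite measure space `(Y, μ)`. Let `H₁ ≤ H₂` be subgroups with `H₁` of
infinite index in `H₂` (`relindex = 0`), and let `U` be a measurable set of positive measure.
Then there is a measurable `U' ⊆ U` of positive measure such that for every `y ∈ U'`, the
collection of right cosets `{H₁h : h ∈ H₂, h·y ∈ U}` is infinite. -/
theorem actionLike_cocycle_of_pmp_action {G : Type*} [Group G] [Countable G]
    {Y : Type*} [MeasurableSpace Y] (μ : Measure Y) [IsFiniteMeasure μ]
    [MulAction G Y]
    (hmeas : ∀ g : G, Measurable (fun y : Y => g • y))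
    (hpres : ∀ g : G, MeasurePreserving (fun y : Y => g • y) μ μ)
    (H₁ H₂ : Subgroup G) (hle : H₁ ≤ H₂) (hinf : H₁.relIndex H₂ = 0)
    (U : Set Y) (hU : MeasurableSet U) (hUpos : 0 < μ U) :
    ∃ U' : Set Y, U' ⊆ U ∧ MeasurableSet U' ∧ 0 < μ U' ∧
      ∀ y ∈ U',
        {s : Set G | ∃ h : G, h ∈ H₂ ∧ h • y ∈ U ∧
          s = (fun x : G => x * h) '' (H₁ : Set G)}.Infinite :=
  actionLike_cocycle_of_pmp_action_general μ hpres H₁ H₂ hinf U hU hUpos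
end
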